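/- arXiv:2408.17208 — 3 statements merged into one kernel-verified Lean document; each statement's English description precedes it below -/
import Mathlib

section
/- Let G be an execution graph with events E, program order po, reads-from rf, modification order mo, and let D ⊆ E be a (po ∪ rf)-closed set. Then the happens-before relation of the restricted graph contains the restriction of happens-before: ⦗D⦘;hb;⦗D⦘ ⊆ hb_D, where hb = (po_rc ∪ sw)⁺ is computed from po, rf and hb_D from the restrictions po ∩ (D×D), rf ∩ (D×D). -/
/-- Synchronizes-with:
`sw := ⦗E≥rel⦘;(⦗F⦘;po)?;⦗W≥rlx⦘;rf⁺;⦗R≥rlx⦘;(po;⦗F⦘)?;⦗E≥acq⦘`. -/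
def swRel {α : Type*} (Erel Wrlx Rrlx Eacq F : Set α)
    (po rf : α → α → Prop) : α → α → Prop :=
  fun a d => a ∈ Erel ∧ d ∈ Eacq ∧
    ∃ w r, (a = w ∨ (a ∈ F ∧ po a w)) ∧ w ∈ Wrlx ∧
      Relation.TransGen rf w r ∧ r ∈ Rrlx ∧
      (r = d ∨ (po r d ∧ d ∈ F))

/-- `po_rc := ⦗E \ W^nt⦘;po ∪ po;⦗RMW^tso ∪ F^≥sf⦘ ∪ po|loc;⦗W⦘`. -/
def poRc {α : Type*} (Wnt RMWF W : Set α) (loc : α → ℕ)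
    (po : α → α → Prop) : α → α → Prop :=
  fun a b => (a ∉ Wnt ∧ po a b) ∨ (po a b ∧ b ∈ RMWF) ∨
    (po a b ∧ loc a = loc b ∧ b ∈ W)

/-- `hb := (po_rc ∪ sw)⁺`. -/
def hbRel {α : Type*} (Erel Wrlx Rrlx Eacq F Wnt RMWF W : Set α) (loc : α → ℕ)
    (po rf : α → α → Prop) : α → α → Prop :=
  Relation.TransGen (fun a b =>
    poRc Wnt RMWF W loc po a b ∨ swRel Erel Wrlx Rrlx Eacq F po rf a b)

/-- Restriction of a relation to a set. -/
def restr {α : Type*} (D : Set α) (R : α → α → Prop) : α → α → Prop :=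
  fun a b => a ∈ D ∧ b ∈ D ∧ R a b

lemma rf_restr {α : Type*} (rf : α → α → Prop) (D : Set α)
    (hclosed : ∀ a b, rf a b → b ∈ D → a ∈ D) :
    ∀ w r, Relation.TransGen rf w r → r ∈ D →
      w ∈ D ∧ Relation.TransGen (restr D rf) w r := by
  intro w r h
  induction h with
  | single h => intro hr; exact ⟨hclosed _ _ h hr, .single ⟨hclosed _ _ h hr, hr, h⟩⟩
  | tail _ h ih =>
    intro hr
    have hm := hclosed _ _ h hr
    obtain ⟨hw, ht⟩ := ih hm
    exact ⟨hw, ht.tail ⟨hm, hr, h⟩⟩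

/-- if `D` is `(po ∪ rf)`-closed, then
`⦗D⦘;hb;⦗D⦘ ⊆ hb_D`, where `hb_D` is computed from the restrictions of
`po` and `rf` to `D`. -/
theorem stmt7 {α : Type*} (Erel Wrlx Rrlx Eacq F Wnt RMWF W : Set α)
    (loc : α → ℕ) (po rf : α → α → Prop) (D : Set α)
    (hclosed : ∀ a b, (po a b ∨ rf a b) → b ∈ D → a ∈ D) :
    ∀ a b, a ∈ D → b ∈ D →
      hbRel Erel Wrlx Rrlx Eacq F Wnt RMWF W loc po rf a b →
      hbRel Erel Wrlx Rrlx Eacq F Wnt RMWF W loc (restr D po) (restr D rf) a b := by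
  have step : ∀ a b, b ∈ D →
      (poRc Wnt RMWF W loc po a b ∨ swRel Erel Wrlx Rrlx Eacq F po rf a b) →
      a ∈ D ∧ (poRc Wnt RMWF W loc (restr D po) a b ∨
        swRel Erel Wrlx Rrlx Eacq F (restr D po) (restr D rf) a b) := by
    intro a b hb h
    rcases h with h | h
    · rcases h with ⟨h1, h2⟩ | ⟨h2, h3⟩ | ⟨h2, h3, h4⟩
      · have ha := hclosed _ _ (Or.inl h2) hb
        exact ⟨ha, Or.inl (Or.inl ⟨h1, ha, hb, h2⟩)⟩
      · have ha := hclosed _ _ (Or.inl h2) hb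
        exact ⟨ha, Or.inl (Or.inr (Or.inl ⟨⟨ha, hb, h2⟩, h3⟩))⟩
      · have ha := hclosed _ _ (Or.inl h2) hb
        exact ⟨ha, Or.inl (Or.inr (Or.inr ⟨⟨ha, hb, h2⟩, h3, h4⟩))⟩
    · obtain ⟨hrel, hacq, w, r, hw, hwrlx, hrf, hrrlx, hr⟩ := h
      have hrD : r ∈ D := by
        rcases hr with rfl | ⟨hpo, _⟩
        · exact hb
        · exact hclosed _ _ (Or.inl hpo) hb
      obtain ⟨hwD, hrf'⟩ := rf_restr rf D (fun x y h => hclosed x y (Or.inr h)) w r hrf hrD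
      have haD : a ∈ D := by
        rcases hw with rfl | ⟨_, hpo⟩
        · exact hwD
        · exact hclosed _ _ (Or.inl hpo) hwD
      refine ⟨haD, Or.inr ⟨hrel, hacq, w, r, ?_, hwrlx, hrf', hrrlx, ?_⟩⟩
      · rcases hw with rfl | ⟨hF, hpo⟩
        · exact Or.inl rfl
        · exact Or.inr ⟨hF, haD, hwD, hpo⟩
      · rcases hr with rfl | ⟨hpo, hF⟩
        · exact Or.inl rfl
        · exact Or.inr ⟨⟨hrD, hb, hpo⟩, hF⟩
  intro a b _ hbD h
  induction h with
  | single h => exact .single (step _ _ hbD h).2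
  | tail h1 h2 ih =>
    obtain ⟨hmD, hs⟩ := step _ _ hbD h2
    exact (ih hmD).tail hs
end

section
/- Suppose ppo, rfe, moe, rbe are relations on events with acyclic(ppo ∪ rfe ∪ moe ∪ rbe) (the Ex86 External axiom), and suppose ⦗codom(rfe)⦘;po ⊆ ppo. Then po ∪ rfe is acyclic. -/
/-- if `ppo ∪ rfe ∪ moe ∪ rbe` is acyclic and
`⦗codom(rfe)⦘;po ⊆ ppo`, then `po ∪ rfe` is acyclic
(`po` being a strict transitive order). -/
theorem stmt11 {α : Type*} (po ppo rfe moe rbe : α → α → Prop)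
    (hPoTrans : Transitive po) (hPoIrr : Irreflexive po)
    (hAcyc : Irreflexive (Relation.TransGen (fun a b =>
      ppo a b ∨ rfe a b ∨ moe a b ∨ rbe a b)))
    (hCodom : ∀ b c, (∃ a, rfe a b) → po b c → ppo b c) :
    Irreflexive (Relation.TransGen (fun a b => po a b ∨ rfe a b)) := by
  intro x hx
  set R := fun a b => ppo a b ∨ rfe a b ∨ moe a b ∨ rbe a b with hR
  have key : ∀ y, Relation.TransGen (fun a b => po a b ∨ rfe a b) x y →
      po x y ∨ ∃ z w, (po x z ∨ x = z) ∧ Relation.TransGen R z w ∧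
        (∃ a, rfe a w) ∧ (po w y ∨ w = y) := by
    intro y h
    induction h with
    | single h =>
      rcases h with h | h
      · exact Or.inl h
      · exact Or.inr ⟨x, _, Or.inr rfl,
          Relation.TransGen.single (Or.inr (Or.inl h)), ⟨x, h⟩, Or.inr rfl⟩
    | tail hxy hyc ih =>
      rename_i y c
      rcases ih with hpo | ⟨z, w, hxz, htg, hw, hwy⟩
      · rcases hyc with h | h
        · exact Or.inl (hPoTrans hpo h)
        · exact Or.inr ⟨y, c, Or.inl hpo,
            Relation.TransGen.single (Or.inr (Or.inl h)), ⟨y, h⟩, Or.inr rfl⟩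
      · rcases hyc with h | h
        · have hwc : po w c ∨ w = c := by
            rcases hwy with h' | rfl
            · exact Or.inl (hPoTrans h' h)
            · exact Or.inl h
          exact Or.inr ⟨z, w, hxz, htg, hw, hwc⟩
        · have htg' : Relation.TransGen R z y := by
            rcases hwy with h' | rfl
            · exact htg.tail (Or.inl (hCodom w y hw h'))
            · exact htg
          exact Or.inr ⟨z, c, hxz, htg'.tail (Or.inr (Or.inl h)), ⟨y, h⟩,
            Or.inr rfl⟩
  rcases key x hx with hpo | ⟨z, w, hxz, htg, hw, hwx⟩
  · exact hPoIrr x hpo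
  · have hcyc : Relation.TransGen R z z := by
      have hwz : po w z ∨ w = z := by
        rcases hwx with h1 | rfl <;> rcases hxz with h2 | rfl
        · exact Or.inl (hPoTrans h1 h2)
        · exact Or.inl h1
        · exact Or.inl h2
        · exact Or.inr rfl
      rcases hwz with h | rfl
      · exact htg.tail (Or.inl (hCodom w z hw h))
      · exact htg
    exact hAcyc z hcyc
end

section
/- Let mo and rb be relations on events with moi ⊆ po-derivable: specifically assume po|loc;⦗E \ R⦘ ⊆ ppo_asm, moi ∪ rbi ⊆ po|loc;⦗E \ R⦘, and acyclic(ppo_asm ∪ eco) where eco = (rfe ∪ mo ∪ rb)⁺. Then po;moi is irreflexive. -/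
theorem Relation.asymm_of_irrefl_transGen {α : Type*} {r : α → α → Prop}
    (h : ∀ x, ¬Relation.TransGen r x x) {a b : α} (hab : r a b) : ¬r b a :=
  fun hba => h a (.head hab (.single hba))

theorem stmt12_general {α : Type*} (po ppoasm rfe mo rb moi rbi : α → α → Prop)
    (Rd : Set α) (loc : α → ℕ)
    (hLocPpo : ∀ a b, po a b → loc a = loc b → b ∉ Rd → ppoasm a b)
    (hInt : ∀ a b, (moi a b ∨ rbi a b) → po a b ∧ loc a = loc b ∧ b ∉ Rd)
    (hmoiMo : ∀ a b, moi a b → mo a b)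
    (hMoDom : ∀ a b, mo a b → a ∉ Rd)
    (hAcyc : Irreflexive (Relation.TransGen (fun a b =>
      ppoasm a b ∨ Relation.TransGen (fun x y => rfe x y ∨ mo x y ∨ rb x y) a b))) :
    Irreflexive (fun a b => ∃ c, po a c ∧ moi c b) := by
  rintro a ⟨c, hac, hca⟩
  obtain ⟨hpo_ca, hloc, ha⟩ := hInt c a (.inl hca)
  have hc : c ∉ Rd := hMoDom c a (hmoiMo c a hca)
  exact Relation.asymm_of_irrefl_transGen hAcyc (.inl (hLocPpo a c hac hloc.symm hc))
    (.inl (hLocPpo c a hpo_ca hloc ha))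

/-- given `po|loc;⦗E \ R⦘ ⊆ ppo_asm`,
`moi ∪ rbi ⊆ po|loc;⦗E \ R⦘`, well-formedness of `mo` (same-location,
write-domain), and acyclicity of `ppo_asm ∪ eco` with
`eco = (rfe ∪ mo ∪ rb)⁺`, the relation `po;moi` is irreflexive. -/
theorem stmt12 {α : Type*} (po ppoasm rfe mo rb moi rbi : α → α → Prop)
    (Rd : Set α) (loc : α → ℕ)
    (hLocPpo : ∀ a b, po a b → loc a = loc b → b ∉ Rd → ppoasm a b)
    (hInt : ∀ a b, (moi a b ∨ rbi a b) → po a b ∧ loc a = loc b ∧ b ∉ Rd)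
    (hmoiMo : ∀ a b, moi a b → mo a b)
    (hrbiRb : ∀ a b, rbi a b → rb a b)
    (hMoLoc : ∀ a b, mo a b → loc a = loc b)
    (hMoDom : ∀ a b, mo a b → a ∉ Rd)
    (hAcyc : Irreflexive (Relation.TransGen (fun a b =>
      ppoasm a b ∨ Relation.TransGen (fun x y => rfe x y ∨ mo x y ∨ rb x y) a b))) :
    Irreflexive (fun a b => ∃ c, po a c ∧ moi c b) :=
  stmt12_general po ppoasm rfe mo rb moi rbi Rd loc hLocPpo hInt hmoiMo hMoDom hAcyc
end
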